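/- arXiv:0803.1943 — 2 statements merged into one kernel-verified Lean document; each statement's English description precedes it below -/
import Mathlib

section
/- Let r be a bounded function on a subshift Σ with finite variation var(r), depending only on nonnegative coordinates, and let ℓ assign to each cylinder K_{x'_{-n},...,x'_{-1}} (relative to a fixed tail x_0^∞) the value exp(-r_n(x'_{-n},...,x'_{-1},x_0^∞))·ψ(x'_{-n},...,x'_{-1},x_0^∞) for a positive continuous ψ. If κ replaces the suffix of length |a| (the word a, with a a prefix of (x'_{-|a|},...,x'_{-1})) by a word b with corresponding value exp(-r_{n+|b|-|a|}(x'_{-n},...,x'_{-|a|-1}, b, x_0^∞))·ψ(...), then the ratio (ℓ∘κ)(K)/ℓ(K) is bounded above by (max ψ/min ψ)·exp(|R⁺(a·x_0^∞, b·x_0^∞)| + var(r)), where R⁺(ax₀^∞, bx₀^∞) := r_{|b|}(bx₀^∞) - r_{|a|}(ax₀^∞). -/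
/-- Concatenation of a finite word with an infinite one-sided sequence. -/
noncomputable def wordConcat {S : Type*} (w : List S) (z : ℕ → S) : ℕ → S :=
  fun i => if h : i < w.length then w.get ⟨i, h⟩ else z (i - w.length)

/-!
Since `r` only sees nonnegative coordinates, the Birkhoff sum of length `|c| + |w|` at `c·w·x`
splits into the `|c|` terms along the orbit of `c·w·x` plus `r_{|w|}(w·x)`. For `w = a` and
`w = b` the second parts differ by `R⁺`, and the `i`-th terms of the first parts are evaluated at
sequences that agree on `|c| - i` coordinates, so they differ by at most `var_{|c|-i}(r)`; these
add up to at most `var(r)`. The `ψ` factors contribute at most `max ψ / min ψ`.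
-/

open Function

section

variable {S : Type*}

abbrev seqShift : (ℕ → S) → (ℕ → S) := fun z n => z (n + 1)

/-- The paper's `var_k(r)`, so that `var(r) = ∑_{k ≥ 1} var_k(r)`. -/
noncomputable def variationAt (r : (ℕ → S) → ℝ) (k : ℕ) : ℝ :=
  sSup {v : ℝ | ∃ z w : ℕ → S, (∀ i < k, z i = w i) ∧ v = |r z - r w|}

theorem seqShift_iterate_apply (i : ℕ) (z : ℕ → S) (n : ℕ) :
    seqShift^[i] z n = z (n + i) := by
  induction i generalizing z with
  | zero => rfl
  | succ i ih => rw [iterate_succ_apply, ih, ← add_assoc]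

theorem seqShift_iterate_wordConcat_append (c w : List S) (z : ℕ → S) :
    seqShift^[c.length] (wordConcat (c ++ w) z) = wordConcat w z := by
  funext n
  simp only [seqShift_iterate_apply, wordConcat, List.length_append, List.get_eq_getElem]
  by_cases h : n < w.length
  · rw [dif_pos (by omega), dif_pos h, List.getElem_append_right (by omega)]
    simp only [Nat.add_sub_cancel]
  · rw [dif_neg (by omega), dif_neg h]
    congr 1; omega

theorem wordConcat_append_apply_of_lt (c w : List S) (z : ℕ → S) {i : ℕ} (hi : i < c.length) :
    wordConcat (c ++ w) z i = c.get ⟨i, hi⟩ := by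
  simp only [wordConcat, List.length_append, List.get_eq_getElem]
  rw [dif_pos (by omega), List.getElem_append_left hi]

theorem birkhoffSum_seqShift_wordConcat_append (r : (ℕ → S) → ℝ) (c w : List S) (z : ℕ → S) :
    birkhoffSum seqShift r (c.length + w.length) (wordConcat (c ++ w) z) =
      birkhoffSum seqShift r c.length (wordConcat (c ++ w) z) +
        birkhoffSum seqShift r w.length (wordConcat w z) := by
  rw [birkhoffSum_add, seqShift_iterate_wordConcat_append]

theorem variationAt_nonneg (r : (ℕ → S) → ℝ) (k : ℕ) : 0 ≤ variationAt r k :=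
  Real.sSup_nonneg (by rintro _ ⟨z, w, -, rfl⟩; exact abs_nonneg _)

theorem abs_sub_le_variationAt {r : (ℕ → S) → ℝ} {M : ℝ} (hM : ∀ z, |r z| ≤ M) {k : ℕ}
    {z w : ℕ → S} (hzw : ∀ i < k, z i = w i) : |r z - r w| ≤ variationAt r k := by
  refine le_csSup ⟨M + M, ?_⟩ ⟨z, w, hzw, rfl⟩
  rintro _ ⟨z', w', -, rfl⟩
  exact (abs_sub _ _).trans (add_le_add (hM z') (hM w'))

theorem birkhoffSum_seqShift_sub_le {r : (ℕ → S) → ℝ} {M : ℝ} (hM : ∀ z, |r z| ≤ M) {n : ℕ}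
    {z w : ℕ → S} (hzw : ∀ i < n, z i = w i) :
    birkhoffSum seqShift r n z - birkhoffSum seqShift r n w ≤
      ∑ k ∈ Finset.range n, variationAt r (k + 1) := by
  rw [birkhoffSum, birkhoffSum, ← Finset.sum_sub_distrib, ← Finset.sum_range_reflect]
  refine Finset.sum_le_sum fun i hi => ?_
  rw [Finset.mem_range] at hi
  -- after reflecting, the `(n - 1 - i)`-th shifts of `z` and `w` agree on `i + 1` coordinates
  refine (le_abs_self _).trans (abs_sub_le_variationAt hM fun j hj => ?_)
  rw [seqShift_iterate_apply, seqShift_iterate_apply]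
  exact hzw _ (by omega)

theorem birkhoffSum_seqShift_sub_le_tsum {r : (ℕ → S) → ℝ} {M : ℝ} (hM : ∀ z, |r z| ≤ M)
    (hsum : Summable (variationAt r)) {n : ℕ} {z w : ℕ → S} (hzw : ∀ i < n, z i = w i) :
    birkhoffSum seqShift r n z - birkhoffSum seqShift r n w ≤
      ∑' k, variationAt r (k + 1) :=
  (birkhoffSum_seqShift_sub_le hM hzw).trans <|
    ((summable_nat_add_iff 1).mpr hsum).sum_le_tsum _ fun k _ => variationAt_nonneg r (k + 1)

theorem exp_neg_mul_div_exp_neg_mul_le {A B D p q cmin cmax : ℝ} (hAB : A - B ≤ D)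
    (hcmin : 0 < cmin) (hp : cmin ≤ p) (hq₀ : 0 ≤ q) (hq : q ≤ cmax) :
    Real.exp (-B) * q / (Real.exp (-A) * p) ≤ cmax / cmin * Real.exp D := by
  have hcmax : 0 ≤ cmax := hq₀.trans hq
  calc Real.exp (-B) * q / (Real.exp (-A) * p) = q / p * Real.exp (A - B) := by
        rw [mul_div_mul_comm, ← Real.exp_sub, neg_sub_neg, mul_comm]
    _ ≤ cmax / cmin * Real.exp D := by gcongr

end

theorem stmt14_general {S : Type*}
    (r : (ℕ → S) → ℝ) (Mr : ℝ) (hMr : ∀ z, |r z| ≤ Mr)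
    (ψ : (ℕ → S) → ℝ) (cmin cmax : ℝ) (hcmin : 0 < cmin)
    (hψ : ∀ z, cmin ≤ ψ z ∧ ψ z ≤ cmax)
    (varAt : ℕ → ℝ)
    (hvarAt : ∀ k, varAt k = sSup {v : ℝ | ∃ z w : ℕ → S,
      (∀ i < k, z i = w i) ∧ v = |r z - r w|})
    (hsum : Summable varAt)
    (Vr : ℝ) (hVr : Vr = ∑' k : ℕ, varAt (k + 1))
    (c a b : List S) (xtail : ℕ → S)
    (Rp : ℝ)
    (hRp : Rp =
      birkhoffSum (fun z n => z (n + 1)) r b.length (wordConcat b xtail) -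
      birkhoffSum (fun z n => z (n + 1)) r a.length (wordConcat a xtail)) :
    (Real.exp (-(birkhoffSum (fun z n => z (n + 1)) r (c.length + b.length)
          (wordConcat (c ++ b) xtail))) * ψ (wordConcat (c ++ b) xtail)) /
      (Real.exp (-(birkhoffSum (fun z n => z (n + 1)) r (c.length + a.length)
          (wordConcat (c ++ a) xtail))) * ψ (wordConcat (c ++ a) xtail)) ≤
      (cmax / cmin) * Real.exp (|Rp| + Vr) := by
  obtain rfl : varAt = variationAt r := funext hvarAt
  have hagree : ∀ i < c.length, wordConcat (c ++ a) xtail i = wordConcat (c ++ b) xtail i :=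
    fun i hi => by
      rw [wordConcat_append_apply_of_lt _ _ _ hi, wordConcat_append_apply_of_lt _ _ _ hi]
  have hhead := birkhoffSum_seqShift_sub_le_tsum hMr hsum hagree
  have hsplit_a := birkhoffSum_seqShift_wordConcat_append r c a xtail
  have hsplit_b := birkhoffSum_seqShift_wordConcat_append r c b xtail
  refine exp_neg_mul_div_exp_neg_mul_le ?_ hcmin (hψ _).1 (hcmin.le.trans (hψ _).1) (hψ _).2
  linarith [neg_abs_le Rp]

/-- Distortion bound for the word-exchange holonomy: for the cylinder mass
`ℓ(w') = exp(-r_{|w'|}(w'·x₀^∞))·ψ(w'·x₀^∞)`, replacing the suffix `a` of the word by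
`b` distorts the mass by at most `(max ψ/min ψ)·exp(|R⁺(a·x₀^∞, b·x₀^∞)| + var(r))`. -/
theorem stmt14 {S : Type*} [Nonempty S]
    (r : (ℕ → S) → ℝ) (Mr : ℝ) (hMr : ∀ z, |r z| ≤ Mr)
    (ψ : (ℕ → S) → ℝ) (cmin cmax : ℝ) (hcmin : 0 < cmin)
    (hψ : ∀ z, cmin ≤ ψ z ∧ ψ z ≤ cmax)
    (varAt : ℕ → ℝ)
    (hvarAt : ∀ k, varAt k = sSup {v : ℝ | ∃ z w : ℕ → S,
      (∀ i < k, z i = w i) ∧ v = |r z - r w|})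
    (hsum : Summable varAt)
    (Vr : ℝ) (hVr : Vr = ∑' k : ℕ, varAt (k + 1))
    (c a b : List S) (xtail : ℕ → S)
    (Rp : ℝ)
    (hRp : Rp =
      birkhoffSum (fun z n => z (n + 1)) r b.length (wordConcat b xtail) -
      birkhoffSum (fun z n => z (n + 1)) r a.length (wordConcat a xtail)) :
    (Real.exp (-(birkhoffSum (fun z n => z (n + 1)) r (c.length + b.length)
          (wordConcat (c ++ b) xtail))) * ψ (wordConcat (c ++ b) xtail)) /
      (Real.exp (-(birkhoffSum (fun z n => z (n + 1)) r (c.length + a.length)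
          (wordConcat (c ++ a) xtail))) * ψ (wordConcat (c ++ a) xtail)) ≤
      (cmax / cmin) * Real.exp (|Rp| + Vr) :=
  stmt14_general r Mr hMr ψ cmin cmax hcmin hψ varAt hvarAt hsum Vr hVr c a b xtail Rp hRp
end

section
/- Let Σ be a subshift of finite type, n₀ ∈ ℕ, and r* : Σ → ℝ bounded with inf (r*)_{n₀} > 0. If x, y ∈ Σ satisfy |r_n(x) - r_m(y)| ≤ C where r = r* up to a bounded coboundary (|r - r*| ≤ 2·sup|h|), and y agrees with a shift of x up to insertion of a word of length M (so that r_m(y) differs from r_{m'}(σ^j x) type sums controllably), then |m - n| ≤ L where L depends only on C, sup r*, sup|h|, sup|r|, var(r), M, n₀ and inf (r*)_{n₀}, but not on x, y, m, n. Concretely: if inf (r*)_{|n-m|} ≤ C + 2·sup|h| + 3M·sup|r| + 2·var(r) then ⌊|n-m|/n₀⌋·inf (r*)_{n₀} ≤ C + 2·sup|h| + 3M·sup|r| + 2·var(r), hence |n-m| ≤ n₀·(1 + (C + 2·sup|h| + 3M·sup|r| + 2·var(r))/inf (r*)_{n₀}). -/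
lemma aux_birk {X : Type*} (σ : X → X) (rs : X → ℝ) (hpos : ∀ x, 0 ≤ rs x)
    (n₀ : ℕ) (c₀ : ℝ) (hinf : ∀ x, c₀ ≤ birkhoffSum σ rs n₀ x) :
    ∀ q : ℕ, ∀ x, (q : ℝ) * c₀ ≤ birkhoffSum σ rs (q * n₀) x := by
  intro q
  induction q with
  | zero => intro x; simp [birkhoffSum_zero]
  | succ k ih =>
    intro x
    rw [Nat.succ_mul, birkhoffSum_add]
    push_cast
    have := ih x
    have := hinf (σ^[k * n₀] x)
    linarith

/-- Index comparison: if `r* ≥ 0` has `n₀`-fold Birkhoff sums bounded below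
by `c₀ > 0` and the Birkhoff sum of length `|n - m|` is ≤ `C + 2sup|h| + 3M·sup|r| +
2var(r)` at some point, then `⌊|n-m|/n₀⌋·c₀` is bounded by the same quantity and hence
`|n - m| ≤ n₀·(1 + (C + 2sup|h| + 3M·sup|r| + 2var(r))/c₀)`. -/
theorem stmt16 {X : Type*} (σ : X → X) (rs : X → ℝ) (hpos : ∀ x, 0 ≤ rs x)
    (n₀ : ℕ) (hn₀ : 0 < n₀) (c₀ : ℝ) (hc₀ : 0 < c₀)
    (hinf : ∀ x, c₀ ≤ birkhoffSum σ rs n₀ x)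
    (n m : ℕ) (C Mh Mr Vr : ℝ) (M : ℕ)
    (hex : ∃ x, birkhoffSum σ rs ((n : ℤ) - m).natAbs x ≤
      C + 2 * Mh + 3 * (M : ℝ) * Mr + 2 * Vr) :
    ((((n : ℤ) - m).natAbs / n₀ : ℕ) : ℝ) * c₀ ≤
        C + 2 * Mh + 3 * (M : ℝ) * Mr + 2 * Vr ∧
    ((((n : ℤ) - m).natAbs : ℕ) : ℝ) ≤
        (n₀ : ℝ) * (1 + (C + 2 * Mh + 3 * (M : ℝ) * Mr + 2 * Vr) / c₀) := by
  obtain ⟨x, hx⟩ := hex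
  set k := ((n : ℤ) - m).natAbs with hk
  set B := C + 2 * Mh + 3 * (M : ℝ) * Mr + 2 * Vr with hB
  set q := k / n₀ with hq
  have hsplit : k = q * n₀ + k % n₀ := by rw [Nat.mul_comm]; exact (Nat.div_add_mod k n₀).symm
  have h1 : (q : ℝ) * c₀ ≤ birkhoffSum σ rs k x := by
    calc (q : ℝ) * c₀ ≤ birkhoffSum σ rs (q * n₀) x :=
          aux_birk σ rs hpos n₀ c₀ hinf q x
      _ ≤ birkhoffSum σ rs k x := by
          conv_rhs => rw [hsplit]
          rw [birkhoffSum_add]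
          have : 0 ≤ birkhoffSum σ rs (k % n₀) (σ^[q * n₀] x) :=
            Finset.sum_nonneg fun i _ => hpos _
          linarith
  have hqB : (q : ℝ) * c₀ ≤ B := le_trans h1 hx
  refine ⟨hqB, ?_⟩
  have hkq : (k : ℝ) ≤ (n₀ : ℝ) * (q + 1) := by
    have : k < (q + 1) * n₀ := by
      rw [hsplit, Nat.add_mul, one_mul]
      exact Nat.add_lt_add_left (Nat.mod_lt _ hn₀) _
    have := (Nat.cast_lt (α := ℝ)).2 this
    push_cast at this
    linarith
  have hqBc : (q : ℝ) ≤ B / c₀ := (le_div_iff₀ hc₀).2 hqB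
  calc (k : ℝ) ≤ (n₀ : ℝ) * (q + 1) := hkq
    _ ≤ (n₀ : ℝ) * (1 + B / c₀) := by
        have : (0:ℝ) ≤ (n₀:ℝ) := Nat.cast_nonneg _
        nlinarith
end
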